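/- Let W be a Coxeter group. Assume the following property of the Hecke-algebra product: for every reduced expression w₁⋯w_p of an element w, writing C'_{w₁}⋯C'_{w_p} = q^{-p/2} Σ_u R_u(q) T_u in the Hecke algebra, the element w is Deodhar if and only if C'_{w₁}⋯C'_{w_p} = C'_w. Then w is Deodhar if and only if w⁻¹ is Deodhar. -/

import Mathlib

open List

namespace Paper

variable {B W : Type*} [Group W]

/-- The product of the subword of `ω` selected by the mask `σ`. -/
def maskProd (M : CoxeterMatrix B) (cs : CoxeterSystem M W)
    (ω : List B) (σ : List Bool) : W :=
  cs.wordProd (((ω.zip σ).filter (fun p => p.2)).map (fun p => p.1))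

/-- The product of the initial subword selected by the first `j` entries of the mask. -/
def maskProdTake (M : CoxeterMatrix B) (cs : CoxeterSystem M W)
    (ω : List B) (σ : List Bool) (j : ℕ) : W :=
  maskProd M cs (ω.take j) (σ.take j)

/-- Position `j` (zero-based; the paper's position `j+1`) is a defect of the reduced
expression `ω` with respect to the mask `σ`. -/
def IsDefect (M : CoxeterMatrix B) (cs : CoxeterSystem M W)
    (ω : List B) (σ : List Bool) (j : Fin ω.length) : Prop :=
  cs.length (maskProdTake M cs ω σ j * cs.simple (ω.get j)) <
    cs.length (maskProdTake M cs ω σ j)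

open Classical in
/-- The number of zero-defects of the mask `σ` on `ω`. -/
noncomputable def zeroDefects (M : CoxeterMatrix B) (cs : CoxeterSystem M W)
    (ω : List B) (σ : List Bool) : ℕ :=
  (Finset.univ.filter (fun j : Fin ω.length =>
    σ.getD (j : ℕ) true = false ∧ IsDefect M cs ω σ j)).card

open Classical in
/-- The number of plain-zeros of the mask `σ` on `ω`. -/
noncomputable def plainZeros (M : CoxeterMatrix B) (cs : CoxeterSystem M W)
    (ω : List B) (σ : List Bool) : ℕ :=
  (Finset.univ.filter (fun j : Fin ω.length =>
    σ.getD (j : ℕ) true = false ∧ ¬ IsDefect M cs ω σ j)).card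

/-- A mask is proper if it has the right length and contains at least one zero. -/
def ProperMask (ω : List B) (σ : List Bool) : Prop :=
  σ.length = ω.length ∧ false ∈ σ

/-- A reduced expression `ω` is Deodhar if every proper mask on it satisfies
(# zero-defects) < (# plain-zeros). -/
def IsDeodharExpr (M : CoxeterMatrix B) (cs : CoxeterSystem M W) (ω : List B) : Prop :=
  ∀ σ : List Bool, ProperMask ω σ → zeroDefects M cs ω σ < plainZeros M cs ω σ

/-- An element is Deodhar if every (equivalently, some) reduced expression for it is Deodhar. -/
def IsDeodharElt (M : CoxeterMatrix B) (cs : CoxeterSystem M W) (w : W) : Prop :=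
  ∀ ω : List B, cs.IsReduced ω → cs.wordProd ω = w → IsDeodharExpr M cs ω

section Dev

open scoped Classical

variable (M : CoxeterMatrix B) (cs : CoxeterSystem M W)

lemma eq_conj_iff {x y z w : W} : x * w * y = z ↔ w = x⁻¹ * z * y⁻¹ :=
  ⟨fun h => by rw [← h]; group, fun h => by rw [h]; group⟩

lemma neg_ite_eq (cnd : Prop) [Decidable cnd] (x : ℤˣ) :
    (if cnd then -x else x) = x * (if cnd then -1 else 1) := by
  split <;> simp

/-- The underlying function of Tits' sign representation generator. -/
noncomputable def etaFun (i : B) : W × ℤˣ → W × ℤˣ :=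
  fun p => (cs.simple i * p.1 * cs.simple i, if p.1 = cs.simple i then -p.2 else p.2)

lemma simple_conj_eq_simple_iff (i : B) (w : W) :
    (cs.simple i * w * cs.simple i = cs.simple i) ↔ (w = cs.simple i) := by
  rw [eq_conj_iff, cs.inv_simple, cs.simple_mul_simple_self, one_mul]

lemma etaFun_involutive (i : B) : Function.Involutive (etaFun M cs i) := by
  rintro ⟨w, e⟩
  unfold etaFun
  simp only
  have h2 := simple_conj_eq_simple_iff M cs i w
  have h1 : cs.simple i * (cs.simple i * w * cs.simple i) * cs.simple i = w := by
    calc cs.simple i * (cs.simple i * w * cs.simple i) * cs.simple i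
        = (cs.simple i * cs.simple i) * w * (cs.simple i * cs.simple i) := by group
      _ = w := by rw [cs.simple_mul_simple_self]; group
  rcases Classical.em (w = cs.simple i) with h | h <;> simp [h2, h, h1]

/-- Tits' sign representation generator as a permutation. -/
noncomputable def eta (i : B) : Equiv.Perm (W × ℤˣ) := (etaFun_involutive M cs i).toPerm

lemma eta_apply (i : B) (p : W × ℤˣ) :
    eta M cs i p = (cs.simple i * p.1 * cs.simple i,
      if p.1 = cs.simple i then -p.2 else p.2) := rfl

lemma simple_mul_pow (i j : B) (m : ℕ) :
    cs.simple j * (cs.simple i * cs.simple j) ^ m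
      = (cs.simple j * cs.simple i) ^ m * cs.simple j := by
  induction m with
  | zero => simp
  | succ m ih =>
    rw [pow_succ', pow_succ]
    calc cs.simple j * (cs.simple i * cs.simple j * (cs.simple i * cs.simple j) ^ m)
        = (cs.simple j * cs.simple i) * (cs.simple j * (cs.simple i * cs.simple j) ^ m) := by
          simp only [← mul_assoc]
      _ = (cs.simple j * cs.simple i) * ((cs.simple j * cs.simple i) ^ m * cs.simple j) := by
          rw [ih]
      _ = (cs.simple j * cs.simple i) ^ m * (cs.simple j * cs.simple i) * cs.simple j := by
          rw [← mul_assoc, ← pow_succ', pow_succ]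

lemma eta_mul_pow_apply (i j : B) (m : ℕ) (p : W × ℤˣ) :
    ((eta M cs i * eta M cs j) ^ m) p =
      ((cs.simple i * cs.simple j) ^ m * p.1 * (cs.simple j * cs.simple i) ^ m,
        p.2 * ∏ r ∈ Finset.range (2 * m),
          (if p.1 = (cs.simple j * cs.simple i) ^ r * cs.simple j then (-1 : ℤˣ) else 1)) := by
  set c := cs.simple i * cs.simple j with hc
  set d := cs.simple j * cs.simple i with hd
  have hcd : c⁻¹ = d := by rw [hc, hd, mul_inv_rev, cs.inv_simple, cs.inv_simple]
  have hdc : d⁻¹ = c := by rw [← hcd]; group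
  have hsc : ∀ n : ℕ, cs.simple j * c ^ n = d ^ n * cs.simple j := fun n => by
    rw [hc, hd]; exact simple_mul_pow M cs i j n
  have hipow : ∀ n : ℕ, (c ^ n)⁻¹ = d ^ n := fun n => by rw [← inv_pow, hcd]
  have hipow' : ∀ n : ℕ, (d ^ n)⁻¹ = c ^ n := fun n => by rw [← inv_pow, hdc]
  have key1 : ∀ n : ℕ, (c ^ n)⁻¹ * cs.simple j * (d ^ n)⁻¹ = d ^ (2 * n) * cs.simple j := by
    intro n
    rw [hipow, hipow', mul_assoc, hsc n, ← mul_assoc, ← pow_add, two_mul]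
  have key2 : ∀ n : ℕ, (cs.simple j * c ^ n)⁻¹ * cs.simple i * (d ^ n * cs.simple j)⁻¹
      = d ^ (2 * n + 1) * cs.simple j := by
    intro n
    have e1 : cs.simple j * cs.simple i * cs.simple j = d * cs.simple j := by rw [hd]
    calc (cs.simple j * c ^ n)⁻¹ * cs.simple i * (d ^ n * cs.simple j)⁻¹
        = (c ^ n)⁻¹ * ((cs.simple j)⁻¹ * cs.simple i * (cs.simple j)⁻¹) * (d ^ n)⁻¹ := by group
      _ = d ^ n * (cs.simple j * cs.simple i * cs.simple j) * c ^ n := by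
          rw [hipow, hipow', cs.inv_simple]
      _ = d ^ n * (d * cs.simple j) * c ^ n := by rw [e1]
      _ = (d ^ n * d) * (cs.simple j * c ^ n) := by group
      _ = (d ^ n * d) * (d ^ n * cs.simple j) := by rw [hsc n]
      _ = (d ^ n * d * d ^ n) * cs.simple j := by group
      _ = d ^ (2 * n + 1) * cs.simple j := by
          congr 1
          rw [← pow_succ, ← pow_add]
          congr 1
          omega
  induction m with
  | zero => simp
  | succ m ih =>
    rw [pow_succ', Equiv.Perm.mul_apply, ih, Equiv.Perm.mul_apply, eta_apply, eta_apply]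
    have h2m : 2 * (m + 1) = 2 * m + 1 + 1 := by ring
    rw [h2m, Finset.prod_range_succ, Finset.prod_range_succ]
    have hC1 : (c ^ m * p.1 * d ^ m = cs.simple j) ↔ (p.1 = d ^ (2 * m) * cs.simple j) := by
      rw [eq_conj_iff, key1 m]
    have hassoc : cs.simple j * (c ^ m * p.1 * d ^ m) * cs.simple j
        = (cs.simple j * c ^ m) * p.1 * (d ^ m * cs.simple j) := by group
    have hC2 : (cs.simple j * (c ^ m * p.1 * d ^ m) * cs.simple j = cs.simple i) ↔
        (p.1 = d ^ (2 * m + 1) * cs.simple j) := by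
      rw [hassoc, eq_conj_iff, key2 m]
    have comp1 : cs.simple i * (cs.simple j * (c ^ m * p.1 * d ^ m) * cs.simple j) * cs.simple i
        = c ^ (m + 1) * p.1 * d ^ (m + 1) := by
      rw [pow_succ', pow_succ, hc, hd]; group
    simp only [Prod.mk.injEq]
    constructor
    · exact comp1
    · rw [neg_ite_eq, neg_ite_eq]
      simp only [hC1, hC2]
      simp [mul_assoc]

lemma eta_liftable : M.IsLiftable (eta M cs) := by
  intro i j
  ext p
  · rw [eta_mul_pow_apply]
    simp [cs.simple_mul_simple_pow i j, cs.simple_mul_simple_pow' i j]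
  · rw [eta_mul_pow_apply]
    have hper : ∀ r : ℕ, (cs.simple j * cs.simple i) ^ (M.M i j + r)
        = (cs.simple j * cs.simple i) ^ r := by
      intro r
      rw [pow_add, cs.simple_mul_simple_pow' i j, one_mul]
    have h2 : 2 * M.M i j = M.M i j + M.M i j := by ring
    rw [h2, Finset.prod_range_add]
    simp only [hper]
    simp [Int.units_mul_self]

/-- Tits' sign representation. -/
noncomputable def phi : W →* Equiv.Perm (W × ℤˣ) := cs.lift ⟨eta M cs, eta_liftable M cs⟩

lemma phi_simple (i : B) : phi M cs (cs.simple i) = eta M cs i :=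
  cs.lift_apply_simple (eta_liftable M cs) i

/-- Sign of `w` with respect to a list of reflections. -/
noncomputable def signProd (w : W) (l : List W) : ℤˣ :=
  (l.map fun t => if w = t then (-1 : ℤˣ) else 1).prod

lemma signProd_nil (w : W) : signProd w [] = 1 := rfl

lemma signProd_cons (w t : W) (l : List W) :
    signProd w (t :: l) = (if w = t then (-1 : ℤˣ) else 1) * signProd w l := by
  simp [signProd]

lemma signProd_concat (w t : W) (l : List W) :
    signProd w (l.concat t) = signProd w l * (if w = t then (-1 : ℤˣ) else 1) := by
  simp [signProd]

lemma signProd_eq_one_of_not_mem {w : W} {l : List W} (h : w ∉ l) : signProd w l = 1 := by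
  induction l with
  | nil => rfl
  | cons t l ih =>
    rw [signProd_cons]
    have : w ≠ t := fun hc => h (hc ▸ List.mem_cons_self)
    rw [if_neg this, one_mul]
    exact ih (fun hc => h (List.mem_cons_of_mem t hc))

lemma mem_of_signProd_ne_one {w : W} {l : List W} (h : signProd w l ≠ 1) : w ∈ l := by
  by_contra hc
  exact h (signProd_eq_one_of_not_mem hc)

lemma phi_wordProd (ω : List B) (p : W × ℤˣ) :
    phi M cs (cs.wordProd ω) p =
      (cs.wordProd ω * p.1 * (cs.wordProd ω)⁻¹,
        p.2 * signProd p.1 (cs.rightInvSeq ω)) := by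
  induction ω with
  | nil => simp [signProd]
  | cons i ω ih =>
    rw [cs.wordProd_cons, map_mul, Equiv.Perm.mul_apply, ih, phi_simple, eta_apply]
    have hris : cs.rightInvSeq (i :: ω)
        = ((cs.wordProd ω)⁻¹ * cs.simple i * cs.wordProd ω) :: cs.rightInvSeq ω := rfl
    rw [hris, signProd_cons]
    simp only [Prod.mk.injEq]
    constructor
    · rw [mul_inv_rev, cs.inv_simple]; group
    · have hcnd : (cs.wordProd ω * p.1 * (cs.wordProd ω)⁻¹ = cs.simple i) ↔
          (p.1 = (cs.wordProd ω)⁻¹ * cs.simple i * cs.wordProd ω) := by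
        rw [eq_conj_iff, inv_inv]
      rw [neg_ite_eq]
      simp only [hcnd]
      rw [mul_right_comm, mul_assoc]

lemma signProd_ris_eq_of_wordProd_eq {ω τ : List B} (h : cs.wordProd ω = cs.wordProd τ)
    (w : W) : signProd w (cs.rightInvSeq ω) = signProd w (cs.rightInvSeq τ) := by
  have h1 := phi_wordProd M cs ω (w, 1)
  have h2 := phi_wordProd M cs τ (w, 1)
  rw [h] at h1
  rw [h1] at h2
  have := congrArg Prod.snd h2
  simpa using this

/-- The exchange condition, for simple reflections on the right. -/
lemma exists_eraseIdx_of_right_descent {ω : List B} (hω : cs.IsReduced ω) {i : B}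
    (h : cs.length (cs.wordProd ω * cs.simple i) < cs.length (cs.wordProd ω)) :
    ∃ j, j < ω.length ∧ cs.wordProd (ω.eraseIdx j) = cs.wordProd ω * cs.simple i := by
  obtain ⟨σ, hσred, hσ⟩ := cs.exists_reduced_word' (cs.wordProd ω * cs.simple i)
  have hτ : cs.wordProd (σ.concat i) = cs.wordProd ω := by
    rw [cs.wordProd_concat, ← hσ, mul_assoc, cs.simple_mul_simple_self, mul_one]
  -- sign of s i in ris (σ.concat i) is -1
  have hnotmem : cs.simple i ∉ cs.rightInvSeq σ := by
    intro hmem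
    have hinv := cs.isRightInversion_of_mem_rightInvSeq hσred hmem
    have : cs.length (cs.wordProd σ * cs.simple i) < cs.length (cs.wordProd σ) := hinv.2
    rw [← hσ, mul_assoc, cs.simple_mul_simple_self, mul_one] at this
    have h2 : cs.length (cs.wordProd σ) = cs.length (cs.wordProd ω * cs.simple i) := by rw [hσ]
    omega
  have hsign1 : signProd (cs.simple i) (cs.rightInvSeq σ) = 1 :=
    signProd_eq_one_of_not_mem hnotmem
  have hsignτ : signProd (cs.simple i) (cs.rightInvSeq (σ.concat i)) = -1 := by
    rw [cs.rightInvSeq_concat, signProd_concat, if_pos rfl]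
    have hmap : signProd (cs.simple i) (List.map (MulAut.conj (cs.simple i)) (cs.rightInvSeq σ))
        = signProd (cs.simple i) (cs.rightInvSeq σ) := by
      unfold signProd
      rw [List.map_map]
      congr 1
      apply List.map_congr_left
      intro t _
      simp only [Function.comp_apply, MulAut.conj_apply, cs.inv_simple]
      have : (cs.simple i = cs.simple i * t * cs.simple i) ↔ (cs.simple i = t) := by
        rw [eq_comm, simple_conj_eq_simple_iff M cs i t, eq_comm]
      simp only [this]
    rw [hmap, hsign1, one_mul]
  have hsignω : signProd (cs.simple i) (cs.rightInvSeq ω) = -1 := by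
    rw [signProd_ris_eq_of_wordProd_eq M cs hτ.symm, hsignτ]
  have hmem : cs.simple i ∈ cs.rightInvSeq ω :=
    mem_of_signProd_ne_one (by rw [hsignω]; decide)
  obtain ⟨j, hj, hget⟩ := List.mem_iff_getElem.mp hmem
  refine ⟨j, by simpa using hj, ?_⟩
  have := cs.wordProd_mul_getD_rightInvSeq ω j
  rw [List.getD_eq_getElem _ _ hj, hget] at this
  rw [← this]

/-- Key length lemma: if `x * s i` goes up and `(s j * x) * s i` goes down,
then `s j * x * s i = x`. -/
lemma lemL {x : W} {i j : B}
    (h1 : ¬ cs.length (x * cs.simple i) < cs.length x)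
    (h2 : cs.length (cs.simple j * x * cs.simple i) < cs.length (cs.simple j * x)) :
    cs.simple j * x * cs.simple i = x := by
  -- first, ℓ (s j * x) = ℓ x + 1
  have hne1 := cs.length_mul_simple_ne x i
  have hx1 : cs.length (x * cs.simple i) = cs.length x + 1 := by
    rcases cs.length_mul_simple x i with h | h
    · exact h
    · omega
  have hsj : cs.length (cs.simple j * x) = cs.length x + 1 := by
    rcases cs.length_simple_mul x j with h | h
    · exact h
    · -- ℓ (s j * x) = ℓ x - 1; derive contradiction
      exfalso
      -- ℓ (s j * x * s i) ≥ ℓ (x * s i) - 1 = ℓ x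
      have hge : cs.length (x * cs.simple i) ≤ cs.length (cs.simple j * (x * cs.simple i)) + 1 := by
        rcases cs.length_simple_mul (x * cs.simple i) j with h' | h'
        · omega
        · omega
      rw [← mul_assoc] at hge
      omega
  obtain ⟨ω, hωred, hωx⟩ := cs.exists_reduced_word' x
  have hωlen : ω.length = cs.length x := by
    rw [hωx]; exact hωred.symm
  have hjred : cs.IsReduced (j :: ω) := by
    show cs.length (cs.wordProd (j :: ω)) = (j :: ω).length
    rw [cs.wordProd_cons, ← hωx, List.length_cons, hsj]
    omega
  have hdesc : cs.length (cs.wordProd (j :: ω) * cs.simple i)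
      < cs.length (cs.wordProd (j :: ω)) := by
    rw [cs.wordProd_cons, ← hωx]
    exact h2
  obtain ⟨k, hk, hkeq⟩ := exists_eraseIdx_of_right_descent M cs hjred hdesc
  rw [cs.wordProd_cons, ← hωx] at hkeq
  cases k with
  | zero =>
    simp only [List.eraseIdx_cons_zero] at hkeq
    rw [← hωx] at hkeq
    exact hkeq.symm
  | succ k' =>
    exfalso
    simp only [List.eraseIdx_cons_succ] at hkeq
    rw [cs.wordProd_cons] at hkeq
    have hxsi : x * cs.simple i = cs.wordProd (ω.eraseIdx k') := by
      have := congrArg (fun z => cs.simple j * z) hkeq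
      simpa [← mul_assoc, cs.simple_mul_simple_cancel_left] using this.symm
    have hlen : cs.length (x * cs.simple i) ≤ (ω.eraseIdx k').length := by
      rw [hxsi]; exact cs.length_wordProd_le _
    have hklen : k' < ω.length := by simpa using hk
    have herase : (ω.eraseIdx k').length = ω.length - 1 := by
      rw [List.length_eraseIdx]
      simp [hklen]
    omega


/-! ### The Hecke-type module and operators -/

open Polynomial

lemma length_inv_mul (u v : W) : cs.length (u⁻¹ * v⁻¹) = cs.length (v * u) := by
  rw [← cs.length_inv]
  congr 1
  simp [mul_inv_rev]

lemma len1 (u : W) (i : B) :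
    cs.length (u⁻¹ * cs.simple i) = cs.length (cs.simple i * u) := by
  rw [← cs.length_inv (u⁻¹ * cs.simple i)]
  congr 1
  simp [mul_inv_rev, cs.inv_simple]

lemma len2 (u : W) (j : B) :
    cs.length (cs.simple j * u⁻¹) = cs.length (u * cs.simple j) := by
  rw [← cs.length_inv (cs.simple j * u⁻¹)]
  congr 1
  simp [mul_inv_rev, cs.inv_simple]

lemma len3 (u : W) (i j : B) :
    cs.length (cs.simple j * u⁻¹ * cs.simple i)
      = cs.length (cs.simple i * u * cs.simple j) := by
  rw [← cs.length_inv (cs.simple j * u⁻¹ * cs.simple i)]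
  congr 1
  simp only [mul_inv_rev, cs.inv_simple, inv_inv]
  rw [← mul_assoc]

/-- P1 : `s i` ascends `u` but descends `u * s j` forces the dihedral collapse. -/
lemma caseP1 {u : W} {i j : B}
    (hc : ¬ cs.length (cs.simple i * u) < cs.length u)
    (hb : cs.length (cs.simple i * u * cs.simple j) < cs.length (u * cs.simple j)) :
    cs.simple i * u * cs.simple j = u := by
  have h1 : ¬ cs.length (u⁻¹ * cs.simple i) < cs.length u⁻¹ := by
    rw [len1, cs.length_inv]; exact hc
  have h2 : cs.length (cs.simple j * u⁻¹ * cs.simple i) < cs.length (cs.simple j * u⁻¹) := by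
    rw [len3, len2]; exact hb
  have h3 := lemL M cs h1 h2
  have h4 := congrArg (fun z : W => z⁻¹) h3
  simp only [mul_inv_rev, cs.inv_simple, inv_inv] at h4
  rw [← mul_assoc] at h4
  exact h4

/-- P2 : `s i` descends `u` but ascends `u * s j` forces the dihedral collapse. -/
lemma caseP2 {u : W} {i j : B}
    (hc : cs.length (cs.simple i * u) < cs.length u)
    (hb : ¬ cs.length (cs.simple i * u * cs.simple j) < cs.length (u * cs.simple j)) :
    cs.simple i * u * cs.simple j = u := by
  have e0 : u⁻¹ * cs.simple i * cs.simple i = u⁻¹ := by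
    rw [mul_assoc, cs.simple_mul_simple_self, mul_one]
  have h1 : ¬ cs.length (u⁻¹ * cs.simple i * cs.simple i) < cs.length (u⁻¹ * cs.simple i) := by
    rw [e0, len1, cs.length_inv]
    omega
  have hne : cs.length (cs.simple i * (u * cs.simple j)) ≠ cs.length (u * cs.simple j) :=
    cs.length_simple_mul_ne (u * cs.simple j) i
  rw [← mul_assoc] at hne
  have h2 : cs.length (cs.simple j * (u⁻¹ * cs.simple i) * cs.simple i)
      < cs.length (cs.simple j * (u⁻¹ * cs.simple i)) := by
    have e1 : cs.simple j * (u⁻¹ * cs.simple i) * cs.simple i = cs.simple j * u⁻¹ := by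
      rw [mul_assoc, mul_assoc, cs.simple_mul_simple_self, mul_one]
    have e2 : cs.simple j * (u⁻¹ * cs.simple i) = cs.simple j * u⁻¹ * cs.simple i := by
      rw [mul_assoc]
    rw [e1, e2, len2, len3]
    omega
  have h3 := lemL M cs h1 h2
  have e1 : cs.simple j * (u⁻¹ * cs.simple i) * cs.simple i = cs.simple j * u⁻¹ := by
    rw [mul_assoc, mul_assoc, cs.simple_mul_simple_self, mul_one]
  rw [e1] at h3
  -- h3 : s j * u⁻¹ = u⁻¹ * s i
  have h4 := congrArg (fun z : W => z⁻¹) h3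
  simp only [mul_inv_rev, cs.inv_simple, inv_inv] at h4
  -- h4 : u * s j = s i * u
  rw [← h4, mul_assoc, cs.simple_mul_simple_self, mul_one]

/-- P4 : `s j` descends `u` but ascends `s i * u` forces the dihedral collapse. -/
lemma caseP4 {u : W} {i j : B}
    (ha : cs.length (u * cs.simple j) < cs.length u)
    (hd : ¬ cs.length (cs.simple i * u * cs.simple j) < cs.length (cs.simple i * u)) :
    cs.simple i * u * cs.simple j = u := by
  have e0 : u * cs.simple j * cs.simple j = u := by
    rw [mul_assoc, cs.simple_mul_simple_self, mul_one]
  have h1 : ¬ cs.length (u * cs.simple j * cs.simple j) < cs.length (u * cs.simple j) := by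
    rw [e0]; omega
  have hne : cs.length (cs.simple i * u * cs.simple j) ≠ cs.length (cs.simple i * u) :=
    cs.length_mul_simple_ne (cs.simple i * u) j
  have h2 : cs.length (cs.simple i * (u * cs.simple j) * cs.simple j)
      < cs.length (cs.simple i * (u * cs.simple j)) := by
    have e1 : cs.simple i * (u * cs.simple j) * cs.simple j = cs.simple i * u := by
      rw [← mul_assoc, mul_assoc (cs.simple i * u), cs.simple_mul_simple_self, mul_one]
    have e2 : cs.simple i * (u * cs.simple j) = cs.simple i * u * cs.simple j := by
      rw [mul_assoc]
    rw [e1, e2]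
    omega
  have h3 := lemL M cs h1 h2
  have e1 : cs.simple i * (u * cs.simple j) * cs.simple j = cs.simple i * u := by
    rw [← mul_assoc, mul_assoc (cs.simple i * u), cs.simple_mul_simple_self, mul_one]
  rw [e1] at h3
  -- h3 : s i * u = u * s j
  rw [h3, mul_assoc, cs.simple_mul_simple_self, mul_one]

/-- P3 is `lemL` itself. -/
lemma caseP3 {u : W} {i j : B}
    (ha : ¬ cs.length (u * cs.simple j) < cs.length u)
    (hd : cs.length (cs.simple i * u * cs.simple j) < cs.length (cs.simple i * u)) :
    cs.simple i * u * cs.simple j = u :=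
  lemL M cs ha hd

lemma iff_bc {u : W} {i j : B} (hne : cs.simple i * u * cs.simple j ≠ u) :
    (cs.length (cs.simple i * u * cs.simple j) < cs.length (u * cs.simple j)) ↔
      (cs.length (cs.simple i * u) < cs.length u) := by
  constructor
  · intro hb
    by_contra hc
    exact hne (caseP1 M cs hc hb)
  · intro hc
    by_contra hb
    exact hne (caseP2 M cs hc hb)

lemma iff_ad {u : W} {i j : B} (hne : cs.simple i * u * cs.simple j ≠ u) :
    (cs.length (u * cs.simple j) < cs.length u) ↔
      (cs.length (cs.simple i * u * cs.simple j) < cs.length (cs.simple i * u)) := by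
  constructor
  · intro ha
    by_contra hd
    exact hne (caseP4 M cs ha hd)
  · intro hd
    by_contra ha
    exact hne (caseP3 M cs ha hd)


/-- Right multiplication by `T_{s i} + 1` on the basis. -/
noncomputable def rhoB (i : B) (u : W) : W →₀ Polynomial ℤ :=
  Finsupp.single (u * cs.simple i)
      ((X : Polynomial ℤ) ^ (if cs.length (u * cs.simple i) < cs.length u then 1 else 0))
    + Finsupp.single u
      ((X : Polynomial ℤ) ^ (if cs.length (u * cs.simple i) < cs.length u then 1 else 0))

/-- Left multiplication by `T_{s i} + 1` on the basis. -/
noncomputable def lamB (i : B) (u : W) : W →₀ Polynomial ℤ :=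
  Finsupp.single (cs.simple i * u)
      ((X : Polynomial ℤ) ^ (if cs.length (cs.simple i * u) < cs.length u then 1 else 0))
    + Finsupp.single u
      ((X : Polynomial ℤ) ^ (if cs.length (cs.simple i * u) < cs.length u then 1 else 0))

/-- Right multiplication by `T_{s i} + 1`. -/
noncomputable def rhoOp (i : B) :
    (W →₀ Polynomial ℤ) →ₗ[Polynomial ℤ] (W →₀ Polynomial ℤ) :=
  Finsupp.lsum ℕ fun u => LinearMap.toSpanSingleton (Polynomial ℤ) _ (rhoB M cs i u)

/-- Left multiplication by `T_{s i} + 1`. -/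
noncomputable def lamOp (i : B) :
    (W →₀ Polynomial ℤ) →ₗ[Polynomial ℤ] (W →₀ Polynomial ℤ) :=
  Finsupp.lsum ℕ fun u => LinearMap.toSpanSingleton (Polynomial ℤ) _ (lamB M cs i u)

lemma rhoOp_single (i : B) (u : W) (c : Polynomial ℤ) :
    rhoOp M cs i (Finsupp.single u c) = c • rhoB M cs i u := by
  simp [rhoOp]

lemma lamOp_single (i : B) (u : W) (c : Polynomial ℤ) :
    lamOp M cs i (Finsupp.single u c) = c • lamB M cs i u := by
  simp [lamOp]

lemma key_comm (i j : B) (u : W) :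
    lamOp M cs i (rhoB M cs j u) = rhoOp M cs j (lamB M cs i u) := by
  rw [rhoB, lamB, map_add, map_add, lamOp_single, lamOp_single, rhoOp_single, rhoOp_single,
    lamB, lamB, rhoB, rhoB]
  simp only [smul_add, Finsupp.smul_single, smul_eq_mul, ← pow_add, ← mul_assoc]
  by_cases hBB : cs.simple i * u * cs.simple j = u
  · -- Case B
    have hsu : cs.simple i * u = u * cs.simple j := by
      have := congrArg (fun z : W => z * cs.simple j) hBB
      rw [mul_assoc, cs.simple_mul_simple_self, mul_one] at this
      exact this
    rw [hBB, hsu]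
  · -- Case A
    have h1 := iff_bc M cs (u := u) (i := i) (j := j) hBB
    have h2 := iff_ad M cs (u := u) (i := i) (j := j) hBB
    simp only [h1, ← h2]
    by_cases ha : cs.length (u * cs.simple j) < cs.length u <;>
      by_cases hc : cs.length (cs.simple i * u) < cs.length u <;>
        simp only [if_pos, if_neg, ha, hc, if_true, if_false] <;> abel


lemma lam_rho_comm (i j : B) :
    (lamOp M cs i).comp (rhoOp M cs j) = (rhoOp M cs j).comp (lamOp M cs i) := by
  apply Finsupp.lhom_ext
  intro u c
  simp only [LinearMap.comp_apply, rhoOp_single, lamOp_single, map_smul]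
  rw [key_comm]

lemma lam_rho_comm_apply (i j : B) (m : W →₀ Polynomial ℤ) :
    lamOp M cs i (rhoOp M cs j m) = rhoOp M cs j (lamOp M cs i m) :=
  LinearMap.congr_fun (lam_rho_comm M cs i j) m

/-- The product `(T_{s i₁} + 1) ⋯ (T_{s iₚ} + 1)`, built by right multiplications. -/
noncomputable def Dv (ω : List B) : W →₀ Polynomial ℤ :=
  ω.foldl (fun m i => rhoOp M cs i m) (Finsupp.single 1 1)

noncomputable def Ev (ω : List B) : W →₀ Polynomial ℤ :=
  ω.foldr (fun i m => lamOp M cs i m) (Finsupp.single 1 1)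

lemma Dv_nil : Dv M cs [] = Finsupp.single 1 1 := rfl

lemma Ev_nil : Ev M cs [] = Finsupp.single 1 1 := rfl

lemma Dv_concat (ω : List B) (i : B) :
    Dv M cs (ω ++ [i]) = rhoOp M cs i (Dv M cs ω) := by
  unfold Dv
  rw [List.foldl_append]
  rfl

lemma Ev_cons (i : B) (ω : List B) :
    Ev M cs (i :: ω) = lamOp M cs i (Ev M cs ω) := rfl

lemma rho_lam_one (i : B) :
    rhoOp M cs i (Finsupp.single 1 1) = lamOp M cs i (Finsupp.single 1 1) := by
  rw [rhoOp_single, lamOp_single, one_smul, one_smul, rhoB, lamB, one_mul, mul_one]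

lemma Dv_cons (i : B) (ω : List B) :
    Dv M cs (i :: ω) = lamOp M cs i (Dv M cs ω) := by
  induction ω using List.reverseRecOn with
  | nil =>
    show Dv M cs ([] ++ [i]) = _
    rw [Dv_concat, Dv_nil, rho_lam_one]
  | append_singleton ω t ih =>
    have : (i :: (ω ++ [t])) = (i :: ω) ++ [t] := by simp
    rw [this, Dv_concat, ih, Dv_concat, lam_rho_comm_apply]

lemma Ev_eq_Dv (ω : List B) : Ev M cs ω = Dv M cs ω := by
  induction ω with
  | nil => rfl
  | cons i ω ih => rw [Ev_cons, ih, Dv_cons]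

/-- The inversion involution on the module. -/
noncomputable def iotaOp :
    (W →₀ Polynomial ℤ) ≃ₗ[Polynomial ℤ] (W →₀ Polynomial ℤ) :=
  Finsupp.domLCongr (Equiv.inv W)

lemma iotaOp_single (u : W) (c : Polynomial ℤ) :
    iotaOp (W := W) (Finsupp.single u c) = Finsupp.single u⁻¹ c := by
  simp [iotaOp]

lemma iota_lamB (i : B) (u : W) :
    iotaOp (W := W) (lamB M cs i u) = rhoB M cs i u⁻¹ := by
  rw [lamB, rhoB, map_add, iotaOp_single, iotaOp_single]
  have e1 : (cs.simple i * u)⁻¹ = u⁻¹ * cs.simple i := by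
    rw [mul_inv_rev, cs.inv_simple]
  have e2 : cs.length (u⁻¹ * cs.simple i) < cs.length u⁻¹ ↔
      cs.length (cs.simple i * u) < cs.length u := by
    rw [len1, cs.length_inv]
  rw [e1]
  simp only [e2]

lemma iota_lam (i : B) (m : W →₀ Polynomial ℤ) :
    iotaOp (W := W) (lamOp M cs i m) = rhoOp M cs i (iotaOp (W := W) m) := by
  have h : ((iotaOp (W := W) : (W →₀ Polynomial ℤ) →ₗ[Polynomial ℤ] (W →₀ Polynomial ℤ)).comp
      (lamOp M cs i)) = (rhoOp M cs i).comp
        (iotaOp (W := W) : (W →₀ Polynomial ℤ) →ₗ[Polynomial ℤ] (W →₀ Polynomial ℤ)) := by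
    apply Finsupp.lhom_ext
    intro u c
    simp only [LinearMap.comp_apply, LinearEquiv.coe_coe, lamOp_single, map_smul,
      iotaOp_single, rhoOp_single]
    rw [iota_lamB]
  exact LinearMap.congr_fun h m

lemma iota_Dv (ω : List B) : iotaOp (W := W) (Dv M cs ω) = Dv M cs ω.reverse := by
  induction ω with
  | nil =>
    rw [Dv_nil, iotaOp_single, inv_one, List.reverse_nil, Dv_nil]
  | cons i ω ih =>
    rw [Dv_cons, iota_lam, ih, List.reverse_cons, Dv_concat]

lemma Dv_reverse_apply (ω : List B) (u : W) :
    Dv M cs ω.reverse u = Dv M cs ω u⁻¹ := by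
  rw [← iota_Dv]
  show (Finsupp.equivMapDomain (Equiv.inv W) (Dv M cs ω)) u = _
  rw [Finsupp.equivMapDomain_apply]
  rfl


/-! ### Masks and statistics -/

/-- All 0/1 masks of length `n`. -/
def masksF : ℕ → Finset (List Bool)
  | 0 => {[]}
  | n + 1 => ((masksF n).image (fun σ => σ ++ [true])) ∪
      ((masksF n).image (fun σ => σ ++ [false]))

lemma mem_masksF {n : ℕ} {σ : List Bool} : σ ∈ masksF n ↔ σ.length = n := by
  induction n generalizing σ with
  | zero => simp [masksF, List.length_eq_zero_iff]
  | succ n ih =>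
    simp only [masksF, Finset.mem_union, Finset.mem_image]
    constructor
    · rintro (⟨τ, hτ, rfl⟩ | ⟨τ, hτ, rfl⟩) <;> simp [ih.mp hτ]
    · intro hlen
      have hne : σ ≠ [] := by
        intro hc; rw [hc] at hlen; simp at hlen
      have hdec := List.dropLast_append_getLast hne
      have hlen' : σ.dropLast.length = n := by
        rw [List.length_dropLast, hlen]; rfl
      rcases Bool.eq_false_or_eq_true (σ.getLast hne) with hb | hb
      · left; exact ⟨σ.dropLast, ih.mpr hlen', by rw [← hb, hdec]⟩
      · right; exact ⟨σ.dropLast, ih.mpr hlen', by rw [← hb, hdec]⟩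

lemma sum_masksF_succ {β : Type*} [AddCommMonoid β] (n : ℕ) (f : List Bool → β) :
    ∑ σ ∈ masksF (n + 1), f σ
      = ∑ σ ∈ masksF n, (f (σ ++ [true]) + f (σ ++ [false])) := by
  have hinj : ∀ b : Bool, Set.InjOn (fun σ : List Bool => σ ++ [b]) (masksF n) := by
    intro b σ _ τ _ h
    have := congrArg List.dropLast h
    simpa [List.dropLast_concat] using this
  have hdisj : Disjoint ((masksF n).image (fun σ => σ ++ [true]))
      ((masksF n).image (fun σ => σ ++ [false])) := by
    rw [Finset.disjoint_left]
    rintro σ h1 h2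
    simp only [Finset.mem_image] at h1 h2
    obtain ⟨τ, _, rfl⟩ := h1
    obtain ⟨τ', _, he⟩ := h2
    have := congrArg List.getLast? he
    simp [List.getLast?_concat] at this
  rw [show masksF (n + 1) = ((masksF n).image (fun σ => σ ++ [true])) ∪
      ((masksF n).image (fun σ => σ ++ [false])) from rfl]
  rw [Finset.sum_union hdisj, Finset.sum_image (hinj true), Finset.sum_image (hinj false),
    ← Finset.sum_add_distrib]

/-- One step of the statistics automaton: state is
(prefix product, zero-defects, plain-zeros, one-defects). -/
noncomputable def statStep : (W × ℕ × ℕ × ℕ) → (B × Bool) → (W × ℕ × ℕ × ℕ) :=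
  fun st pr =>
    ((if pr.2 then st.1 * cs.simple pr.1 else st.1),
     st.2.1 + (if pr.2 = false ∧ cs.length (st.1 * cs.simple pr.1) < cs.length st.1
       then 1 else 0),
     st.2.2.1 + (if pr.2 = false ∧ ¬ cs.length (st.1 * cs.simple pr.1) < cs.length st.1
       then 1 else 0),
     st.2.2.2 + (if pr.2 = true ∧ cs.length (st.1 * cs.simple pr.1) < cs.length st.1
       then 1 else 0))

noncomputable def statRun (ζ : List (B × Bool)) : W × ℕ × ℕ × ℕ :=
  ζ.foldl (statStep M cs) (1, 0, 0, 0)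

noncomputable def mpF (ζ : List (B × Bool)) : W := (statRun M cs ζ).1
noncomputable def zdF (ζ : List (B × Bool)) : ℕ := (statRun M cs ζ).2.1
noncomputable def plF (ζ : List (B × Bool)) : ℕ := (statRun M cs ζ).2.2.1
noncomputable def d1F (ζ : List (B × Bool)) : ℕ := (statRun M cs ζ).2.2.2
noncomputable def dF (ζ : List (B × Bool)) : ℕ := zdF M cs ζ + d1F M cs ζ

lemma statRun_concat (ζ : List (B × Bool)) (pr : B × Bool) :
    statRun M cs (ζ ++ [pr]) = statStep M cs (statRun M cs ζ) pr := by
  unfold statRun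
  rw [List.foldl_append]
  rfl

lemma statRun_nil : statRun M cs [] = (1, 0, 0, 0) := rfl

/-- Identity (I):  ℓ(prefix product) + #zeros + 2·(#one-defects) = length. -/
lemma statRun_length (ζ : List (B × Bool)) :
    cs.length (mpF M cs ζ) + (zdF M cs ζ + plF M cs ζ) + 2 * d1F M cs ζ = ζ.length := by
  induction ζ using List.reverseRecOn with
  | nil => simp [mpF, zdF, plF, d1F, statRun_nil]
  | append_singleton ζ pr ih =>
    obtain ⟨i, b⟩ := pr
    unfold mpF zdF plF d1F at ih ⊢
    rw [statRun_concat]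
    unfold statStep
    simp only [List.length_append, List.length_singleton]
    set st := statRun M cs ζ with hst
    rcases cs.length_mul_simple st.1 i with hlen | hlen
    · -- ascent
      have hnd : ¬ cs.length (st.1 * cs.simple i) < cs.length st.1 := by omega
      cases b <;> simp only [if_pos, if_neg, hnd, Bool.false_eq_true, if_false, if_true,
        and_true, and_false, true_and, false_and, not_false_iff] <;> simp [hnd, hlen] <;> omega
    · -- descent
      have hd : cs.length (st.1 * cs.simple i) < cs.length st.1 := by omega
      cases b <;> simp [hd, hlen] <;> omega

/-- Expansion (II): the product vector as a sum over masks. -/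
lemma Dv_expansion (ω : List B) :
    Dv M cs ω = ∑ σ ∈ masksF ω.length,
      Finsupp.single (mpF M cs (ω.zip σ)) ((X : Polynomial ℤ) ^ dF M cs (ω.zip σ)) := by
  induction ω using List.reverseRecOn with
  | nil =>
    simp [Dv_nil, masksF, mpF, dF, zdF, d1F, statRun_nil]
  | append_singleton ω i ih =>
    rw [Dv_concat, ih, map_sum]
    rw [show (ω ++ [i]).length = ω.length + 1 by simp]
    rw [sum_masksF_succ]
    apply Finset.sum_congr rfl
    intro σ hσ
    have hlen : ω.length = σ.length := (mem_masksF.mp hσ).symm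
    have hzipt : (ω ++ [i]).zip (σ ++ [true]) = ω.zip σ ++ [(i, true)] :=
      List.zip_append hlen
    have hzipf : (ω ++ [i]).zip (σ ++ [false]) = ω.zip σ ++ [(i, false)] :=
      List.zip_append hlen
    rw [hzipt, hzipf]
    rw [rhoOp_single]
    unfold rhoB
    rw [smul_add]
    set ζ := ω.zip σ with hζ
    have hmpt : mpF M cs (ζ ++ [(i, true)]) = mpF M cs ζ * cs.simple i := by
      unfold mpF; rw [statRun_concat]; rfl
    have hmpf : mpF M cs (ζ ++ [(i, false)]) = mpF M cs ζ := by
      unfold mpF; rw [statRun_concat]; rfl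
    have hdt : dF M cs (ζ ++ [(i, true)]) = dF M cs ζ +
        (if cs.length (mpF M cs ζ * cs.simple i) < cs.length (mpF M cs ζ) then 1 else 0) := by
      unfold dF zdF d1F mpF
      rw [statRun_concat]
      by_cases hc : cs.length ((statRun M cs ζ).1 * cs.simple i) < cs.length ((statRun M cs ζ).1)
      · simp [statStep, hc]; omega
      · simp [statStep, hc]
    have hdf : dF M cs (ζ ++ [(i, false)]) = dF M cs ζ +
        (if cs.length (mpF M cs ζ * cs.simple i) < cs.length (mpF M cs ζ) then 1 else 0) := by
      unfold dF zdF d1F mpF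
      rw [statRun_concat]
      by_cases hc : cs.length ((statRun M cs ζ).1 * cs.simple i) < cs.length ((statRun M cs ζ).1)
      · simp [statStep, hc]; omega
      · simp [statStep, hc]
    simp only [hmpt, hmpf, hdt, hdf, Finsupp.smul_single, smul_eq_mul, ← pow_add]


/-! ### Counting masks -/

open Classical in
/-- Number of masks with given subword product and defect count. -/
noncomputable def cntAll (ω : List B) (u : W) (n : ℕ) : ℕ :=
  ((masksF ω.length).filter
    (fun σ => mpF M cs (ω.zip σ) = u ∧ dF M cs (ω.zip σ) = n)).card

open Classical in
/-- Number of non-full masks with given subword product and defect count. -/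
noncomputable def cnt (ω : List B) (u : W) (n : ℕ) : ℕ :=
  ((masksF ω.length).filter
    (fun σ => (mpF M cs (ω.zip σ) = u ∧ dF M cs (ω.zip σ) = n) ∧
      ¬ σ = List.replicate ω.length true)).card

open Classical in
lemma Dv_coeff (ω : List B) (u : W) (n : ℕ) :
    (Dv M cs ω u).coeff n = (cntAll M cs ω u n : ℤ) := by
  rw [Dv_expansion, Finsupp.finset_sum_apply, Polynomial.finset_sum_coeff]
  rw [cntAll, ← Finset.sum_boole]
  apply Finset.sum_congr rfl
  intro σ _
  rw [Finsupp.single_apply]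
  by_cases h1 : mpF M cs (ω.zip σ) = u
  · rw [if_pos h1, Polynomial.coeff_X_pow]
    by_cases h2 : dF M cs (ω.zip σ) = n
    · rw [if_pos (by omega : n = dF M cs (ω.zip σ)), if_pos ⟨h1, h2⟩]
    · rw [if_neg (by omega : ¬ n = dF M cs (ω.zip σ)), if_neg (by tauto)]
  · rw [if_neg h1, if_neg (by tauto), Polynomial.coeff_zero]

lemma cntAll_symm (ω : List B) (u : W) (n : ℕ) :
    cntAll M cs ω u n = cntAll M cs ω.reverse u⁻¹ n := by
  have h1 := Dv_coeff M cs ω u n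
  have h2 := Dv_coeff M cs ω.reverse u⁻¹ n
  have h3 : Dv M cs ω.reverse u⁻¹ = Dv M cs ω u := by
    rw [Dv_reverse_apply, inv_inv]
  rw [h3, h1] at h2
  exact_mod_cast h2

/-- stats of the full mask -/
lemma full_mask_run (ω : List B) :
    mpF M cs (ω.zip (List.replicate ω.length true)) = cs.wordProd ω ∧
      zdF M cs (ω.zip (List.replicate ω.length true)) = 0 ∧
      plF M cs (ω.zip (List.replicate ω.length true)) = 0 := by
  induction ω using List.reverseRecOn with
  | nil => exact ⟨by simp [mpF, statRun_nil], rfl, rfl⟩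
  | append_singleton ω i ih =>
    have hlen : (ω ++ [i]).length = ω.length + 1 := by simp
    have hzip : (ω ++ [i]).zip (List.replicate (ω ++ [i]).length true)
        = ω.zip (List.replicate ω.length true) ++ [(i, true)] := by
      rw [hlen, List.replicate_succ']
      exact List.zip_append (by simp)
    obtain ⟨h1, h2, h3⟩ := ih
    refine ⟨?_, ?_, ?_⟩
    · rw [hzip]
      unfold mpF
      rw [statRun_concat]
      unfold mpF at h1
      simp [statStep, h1, cs.wordProd_append]
    · rw [hzip]
      unfold zdF
      rw [statRun_concat]
      unfold zdF at h2
      simp [statStep, h2]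
    · rw [hzip]
      unfold plF
      rw [statRun_concat]
      unfold plF at h3
      simp [statStep, h3]

open Classical in
lemma cntAll_eq_cnt (ω : List B) (u : W) (n : ℕ) :
    cntAll M cs ω u n = cnt M cs ω u n +
      (if cs.wordProd ω = u ∧ cs.length (cs.wordProd ω) + 2 * n = ω.length then 1 else 0) := by
  classical
  set rep := List.replicate ω.length true with hrep
  set P : List Bool → Prop := fun σ => mpF M cs (ω.zip σ) = u ∧ dF M cs (ω.zip σ) = n with hP
  have h0 := Finset.card_filter_add_card_filter_not
      (s := (masksF ω.length).filter P) (p := fun σ => σ = rep)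
  rw [Finset.filter_filter, Finset.filter_filter] at h0
  obtain ⟨hfm, hfz, hfp⟩ := full_mask_run M cs ω
  have hfd : cs.length (cs.wordProd ω) + 2 * dF M cs (ω.zip rep) = ω.length := by
    have hsl := statRun_length M cs (ω.zip rep)
    rw [hrep] at hsl ⊢
    rw [hfm, hfz, hfp] at hsl
    have hzlen : (ω.zip (List.replicate ω.length true)).length = ω.length := by simp
    unfold dF
    rw [hfz]
    omega
  have hlast : ((masksF ω.length).filter (fun σ => P σ ∧ σ = rep)).card
      = (if cs.wordProd ω = u ∧ cs.length (cs.wordProd ω) + 2 * n = ω.length then 1 else 0) := by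
    by_cases hc : cs.wordProd ω = u ∧ cs.length (cs.wordProd ω) + 2 * n = ω.length
    · rw [if_pos hc]
      have hPrep : P rep := by
        constructor
        · rw [hrep, hfm]; exact hc.1
        · have := hfd; omega
      have he : (masksF ω.length).filter (fun σ => P σ ∧ σ = rep) = {rep} := by
        apply Finset.ext
        intro σ
        simp only [Finset.mem_filter, Finset.mem_singleton]
        constructor
        · tauto
        · intro hs
          subst hs
          exact ⟨mem_masksF.mpr (by rw [hrep]; simp), hPrep, rfl⟩
      rw [he, Finset.card_singleton]
    · rw [if_neg hc]
      have he : (masksF ω.length).filter (fun σ => P σ ∧ σ = rep) = ∅ := by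
        apply Finset.ext
        intro σ
        simp only [Finset.mem_filter, Finset.notMem_empty, iff_false]
        rintro ⟨_, ⟨hp1, hp2⟩, rfl⟩
        apply hc
        constructor
        · rw [← hfm]; exact hp1
        · rw [← hp2]; exact hfd
      rw [he, Finset.card_empty]
  have hcnt : cnt M cs ω u n
      = ((masksF ω.length).filter (fun σ => P σ ∧ ¬ σ = rep)).card := rfl
  have hall : cntAll M cs ω u n = ((masksF ω.length).filter P).card := rfl
  omega

lemma cnt_symm (ω : List B) (u : W) (n : ℕ) :
    cnt M cs ω u n = cnt M cs ω.reverse u⁻¹ n := by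
  have h1 := cntAll_symm M cs ω u n
  have h2 := cntAll_eq_cnt M cs ω u n
  have h3 := cntAll_eq_cnt M cs ω.reverse u⁻¹ n
  have hiff : (cs.wordProd ω = u ∧ cs.length (cs.wordProd ω) + 2 * n = ω.length) ↔
      (cs.wordProd ω.reverse = u⁻¹ ∧
        cs.length (cs.wordProd ω.reverse) + 2 * n = ω.reverse.length) := by
    rw [cs.wordProd_reverse, cs.length_inv, List.length_reverse]
    constructor
    · rintro ⟨rfl, hb⟩; exact ⟨rfl, hb⟩
    · rintro ⟨ha, hb⟩
      exact ⟨inv_injective ha, hb⟩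
  by_cases hc : cs.wordProd ω = u ∧ cs.length (cs.wordProd ω) + 2 * n = ω.length
  · rw [if_pos hc] at h2
    rw [if_pos (hiff.mp hc)] at h3
    omega
  · rw [if_neg hc] at h2
    rw [if_neg (fun hx => hc (hiff.mpr hx))] at h3
    omega


/-! ### Bridge between the two descriptions -/

open Classical in
/-- Zero-defect at numeric position `j`. -/
def zDefAt (ω : List B) (σ : List Bool) (j : ℕ) : Prop :=
  ∃ h : j < ω.length, σ.getD j true = false ∧ IsDefect M cs ω σ ⟨j, h⟩

open Classical in
/-- Plain zero at numeric position `j`. -/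
def pZeroAt (ω : List B) (σ : List Bool) (j : ℕ) : Prop :=
  ∃ h : j < ω.length, σ.getD j true = false ∧ ¬ IsDefect M cs ω σ ⟨j, h⟩

open Classical in
lemma zeroDefects_eq_sum (ω : List B) (σ : List Bool) :
    zeroDefects M cs ω σ = ∑ j ∈ Finset.range ω.length,
      (if zDefAt M cs ω σ j then 1 else 0) := by
  rw [zeroDefects, Finset.card_filter]
  rw [← Fin.sum_univ_eq_sum_range (fun j => if zDefAt M cs ω σ j then 1 else 0) ω.length]
  apply Finset.sum_congr rfl
  intro j _
  congr 1
  apply propext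
  constructor
  · intro hp
    exact ⟨j.isLt, hp⟩
  · rintro ⟨h, hp⟩
    exact hp

open Classical in
lemma plainZeros_eq_sum (ω : List B) (σ : List Bool) :
    plainZeros M cs ω σ = ∑ j ∈ Finset.range ω.length,
      (if pZeroAt M cs ω σ j then 1 else 0) := by
  rw [plainZeros, Finset.card_filter]
  rw [← Fin.sum_univ_eq_sum_range (fun j => if pZeroAt M cs ω σ j then 1 else 0) ω.length]
  apply Finset.sum_congr rfl
  intro j _
  congr 1
  apply propext
  constructor
  · intro hp
    exact ⟨j.isLt, hp⟩
  · rintro ⟨h, hp⟩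
    exact hp

lemma maskProd_concat {ω : List B} {τ : List Bool} (hlen : τ.length = ω.length)
    (i : B) (b : Bool) :
    maskProd M cs (ω ++ [i]) (τ ++ [b])
      = if b then maskProd M cs ω τ * cs.simple i else maskProd M cs ω τ := by
  unfold maskProd
  rw [List.zip_append hlen.symm, List.filter_append, List.map_append, cs.wordProd_append]
  cases b
  · simp
  · simp [cs.wordProd_append]

lemma maskProdTake_concat {ω : List B} {τ : List Bool} (hlen : τ.length = ω.length)
    (i : B) (b : Bool) {j : ℕ} (hj : j ≤ ω.length) :
    maskProdTake M cs (ω ++ [i]) (τ ++ [b]) j = maskProdTake M cs ω τ j := by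
  unfold maskProdTake
  rw [List.take_append_of_le_length hj, List.take_append_of_le_length (by omega)]

lemma maskProdTake_full {ω : List B} {τ : List Bool} (hlen : τ.length = ω.length) :
    maskProdTake M cs ω τ ω.length = maskProd M cs ω τ := by
  unfold maskProdTake
  rw [List.take_length, show ω.length = τ.length from hlen.symm, List.take_length]

lemma zDefAt_concat_lt {ω : List B} {τ : List Bool} (hlen : τ.length = ω.length)
    (i : B) (b : Bool) {j : ℕ} (hj : j < ω.length) :
    zDefAt M cs (ω ++ [i]) (τ ++ [b]) j ↔ zDefAt M cs ω τ j := by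
  unfold zDefAt IsDefect
  have e1 := maskProdTake_concat M cs hlen i b (le_of_lt hj)
  have e2 : (τ ++ [b]).getD j true = τ.getD j true :=
    List.getD_append _ _ _ _ (by omega)
  have hjlt : j < (ω ++ [i]).length := by simp; omega
  have e3 : (ω ++ [i]).get ⟨j, hjlt⟩ = ω.get ⟨j, hj⟩ := by
    rw [List.get_eq_getElem, List.get_eq_getElem]
    exact List.getElem_append_left _
  constructor
  · rintro ⟨h, h1, h2⟩
    refine ⟨hj, by rwa [e2] at h1, ?_⟩
    rw [e1, e3] at h2
    exact h2
  · rintro ⟨h, h1, h2⟩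
    refine ⟨hjlt, by rwa [e2], ?_⟩
    rw [e1, e3]
    exact h2

lemma pZeroAt_concat_lt {ω : List B} {τ : List Bool} (hlen : τ.length = ω.length)
    (i : B) (b : Bool) {j : ℕ} (hj : j < ω.length) :
    pZeroAt M cs (ω ++ [i]) (τ ++ [b]) j ↔ pZeroAt M cs ω τ j := by
  unfold pZeroAt IsDefect
  have e1 := maskProdTake_concat M cs hlen i b (le_of_lt hj)
  have e2 : (τ ++ [b]).getD j true = τ.getD j true :=
    List.getD_append _ _ _ _ (by omega)
  have hjlt : j < (ω ++ [i]).length := by simp; omega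
  have e3 : (ω ++ [i]).get ⟨j, hjlt⟩ = ω.get ⟨j, hj⟩ := by
    rw [List.get_eq_getElem, List.get_eq_getElem]
    exact List.getElem_append_left _
  constructor
  · rintro ⟨h, h1, h2⟩
    refine ⟨hj, by rwa [e2] at h1, ?_⟩
    rw [e1, e3] at h2
    exact h2
  · rintro ⟨h, h1, h2⟩
    refine ⟨hjlt, by rwa [e2], ?_⟩
    rw [e1, e3]
    exact h2

lemma zDefAt_concat_last {ω : List B} {τ : List Bool} (hlen : τ.length = ω.length)
    (i : B) (b : Bool) :
    zDefAt M cs (ω ++ [i]) (τ ++ [b]) ω.length ↔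
      (b = false ∧ cs.length (maskProd M cs ω τ * cs.simple i)
        < cs.length (maskProd M cs ω τ)) := by
  unfold zDefAt IsDefect
  have hjlt : ω.length < (ω ++ [i]).length := by simp
  have e1 : maskProdTake M cs (ω ++ [i]) (τ ++ [b]) ω.length = maskProd M cs ω τ := by
    rw [maskProdTake_concat M cs hlen i b (le_refl _), maskProdTake_full M cs hlen]
  have e2 : (τ ++ [b]).getD ω.length true = b := by
    rw [List.getD_append_right _ _ _ _ (by omega)]
    rw [hlen, Nat.sub_self]
    rfl
  have e3 : (ω ++ [i]).get ⟨ω.length, hjlt⟩ = i := by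
    rw [List.get_eq_getElem]
    exact List.getElem_concat_length rfl _
  constructor
  · rintro ⟨h, h1, h2⟩
    rw [e2] at h1
    rw [e1, e3] at h2
    exact ⟨h1, h2⟩
  · rintro ⟨h1, h2⟩
    refine ⟨hjlt, by rwa [e2], ?_⟩
    rw [e1, e3]
    exact h2

lemma pZeroAt_concat_last {ω : List B} {τ : List Bool} (hlen : τ.length = ω.length)
    (i : B) (b : Bool) :
    pZeroAt M cs (ω ++ [i]) (τ ++ [b]) ω.length ↔
      (b = false ∧ ¬ cs.length (maskProd M cs ω τ * cs.simple i)
        < cs.length (maskProd M cs ω τ)) := by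
  unfold pZeroAt IsDefect
  have hjlt : ω.length < (ω ++ [i]).length := by simp
  have e1 : maskProdTake M cs (ω ++ [i]) (τ ++ [b]) ω.length = maskProd M cs ω τ := by
    rw [maskProdTake_concat M cs hlen i b (le_refl _), maskProdTake_full M cs hlen]
  have e2 : (τ ++ [b]).getD ω.length true = b := by
    rw [List.getD_append_right _ _ _ _ (by omega)]
    rw [hlen, Nat.sub_self]
    rfl
  have e3 : (ω ++ [i]).get ⟨ω.length, hjlt⟩ = i := by
    rw [List.get_eq_getElem]
    exact List.getElem_concat_length rfl _
  constructor
  · rintro ⟨h, h1, h2⟩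
    rw [e2] at h1
    rw [e1, e3] at h2
    exact ⟨h1, h2⟩
  · rintro ⟨h1, h2⟩
    refine ⟨hjlt, by rwa [e2], ?_⟩
    rw [e1, e3]
    exact h2

open Classical in
/-- The bridge: statement statistics agree with the automaton statistics. -/
lemma bridge (ω : List B) : ∀ σ : List Bool, σ.length = ω.length →
    maskProd M cs ω σ = mpF M cs (ω.zip σ) ∧
    zeroDefects M cs ω σ = zdF M cs (ω.zip σ) ∧
    plainZeros M cs ω σ = plF M cs (ω.zip σ) := by
  induction ω using List.reverseRecOn with
  | nil =>
    intro σ hσ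
    have : σ = [] := List.length_eq_zero_iff.mp hσ
    subst this
    refine ⟨rfl, ?_, ?_⟩
    · rw [zeroDefects]
      simp only [List.length_nil]
      rw [show (Finset.univ : Finset (Fin 0)) = ∅ from rfl]
      rfl
    · rw [plainZeros]
      simp only [List.length_nil]
      rw [show (Finset.univ : Finset (Fin 0)) = ∅ from rfl]
      rfl
  | append_singleton ω i ih =>
    intro σ hσ
    have hne : σ ≠ [] := by
      intro hc
      rw [hc] at hσ
      simp at hσ
    set τ := σ.dropLast with hτ
    set b := σ.getLast hne with hb
    have hdec : τ ++ [b] = σ := List.dropLast_append_getLast hne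
    have hτlen : τ.length = ω.length := by
      have := congrArg List.length hdec
      simp at this ⊢
      simp at hσ
      omega
    obtain ⟨ihm, ihz, ihp⟩ := ih τ hτlen
    have hzip : (ω ++ [i]).zip (τ ++ [b]) = ω.zip τ ++ [(i, b)] :=
      List.zip_append hτlen.symm
    rw [← hdec, hzip]
    -- component lemmas for the automaton
    have hmp : mpF M cs (ω.zip τ ++ [(i, b)])
        = if b then mpF M cs (ω.zip τ) * cs.simple i else mpF M cs (ω.zip τ) := by
      unfold mpF
      rw [statRun_concat]
      cases b <;> rfl
    have hzd : zdF M cs (ω.zip τ ++ [(i, b)]) = zdF M cs (ω.zip τ) +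
        (if b = false ∧ cs.length (mpF M cs (ω.zip τ) * cs.simple i)
          < cs.length (mpF M cs (ω.zip τ)) then 1 else 0) := by
      unfold zdF mpF
      rw [statRun_concat]
      rfl
    have hpl : plF M cs (ω.zip τ ++ [(i, b)]) = plF M cs (ω.zip τ) +
        (if b = false ∧ ¬ cs.length (mpF M cs (ω.zip τ) * cs.simple i)
          < cs.length (mpF M cs (ω.zip τ)) then 1 else 0) := by
      unfold plF mpF
      rw [statRun_concat]
      rfl
    refine ⟨?_, ?_, ?_⟩
    · rw [maskProd_concat M cs hτlen i b, hmp, ihm]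
    · rw [zeroDefects_eq_sum, hzd, ← ihz]
      rw [show (ω ++ [i]).length = ω.length + 1 by simp]
      rw [Finset.sum_range_succ]
      congr 1
      · rw [zeroDefects_eq_sum]
        apply Finset.sum_congr rfl
        intro j hj
        have hjlt : j < ω.length := Finset.mem_range.mp hj
        congr 1
        apply propext
        exact zDefAt_concat_lt M cs hτlen i b hjlt
      · rw [← ihm]
        congr 1
        apply propext
        exact zDefAt_concat_last M cs hτlen i b
    · rw [plainZeros_eq_sum, hpl, ← ihp]
      rw [show (ω ++ [i]).length = ω.length + 1 by simp]
      rw [Finset.sum_range_succ]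
      congr 1
      · rw [plainZeros_eq_sum]
        apply Finset.sum_congr rfl
        intro j hj
        have hjlt : j < ω.length := Finset.mem_range.mp hj
        congr 1
        apply propext
        exact pZeroAt_concat_lt M cs hτlen i b hjlt
      · rw [← ihm]
        congr 1
        apply propext
        exact pZeroAt_concat_last M cs hτlen i b

lemma false_mem_iff {σ : List Bool} {n : ℕ} (h : σ.length = n) :
    false ∈ σ ↔ σ ≠ List.replicate n true := by
  constructor
  · intro hf hc
    rw [hc] at hf
    have := List.eq_of_mem_replicate hf
    exact Bool.false_ne_true this
  · intro hne
    by_contra hf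
    apply hne
    apply List.eq_replicate_iff.mpr
    refine ⟨h, ?_⟩
    intro c hc
    cases c
    · exact absurd hc hf
    · rfl


/-- The key transfer: the Deodhar property of an expression passes to its reverse. -/
lemma deodhar_expr_reverse (ω : List B) (h : IsDeodharExpr M cs ω) :
    IsDeodharExpr M cs ω.reverse := by
  classical
  intro σ hproper
  by_contra hbad
  push_neg at hbad
  obtain ⟨hσlen, hσf⟩ := hproper
  obtain ⟨hm, hz, hp⟩ := bridge M cs ω.reverse σ hσlen
  set u := mpF M cs (ω.reverse.zip σ) with hu
  set n := dF M cs (ω.reverse.zip σ) with hn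
  have hσne : σ ≠ List.replicate ω.reverse.length true := (false_mem_iff hσlen).mp hσf
  have hmem : σ ∈ (masksF ω.reverse.length).filter
      (fun σ' => (mpF M cs (ω.reverse.zip σ') = u ∧ dF M cs (ω.reverse.zip σ') = n) ∧
        ¬ σ' = List.replicate ω.reverse.length true) := by
    rw [Finset.mem_filter]
    exact ⟨mem_masksF.mpr hσlen, ⟨rfl, rfl⟩, hσne⟩
  have hpos : 0 < cnt M cs ω.reverse u n := Finset.card_pos.mpr ⟨σ, hmem⟩
  have hsymm := cnt_symm M cs ω.reverse u n
  rw [List.reverse_reverse] at hsymm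
  have hpos' : 0 < cnt M cs ω u⁻¹ n := by omega
  obtain ⟨τ, hτmem⟩ := Finset.card_pos.mp hpos'
  rw [Finset.mem_filter] at hτmem
  obtain ⟨hτmask, ⟨hτm, hτd⟩, hτne⟩ := hτmem
  have hτlen : τ.length = ω.length := mem_masksF.mp hτmask
  have hτf : false ∈ τ := (false_mem_iff hτlen).mpr hτne
  obtain ⟨hm2, hz2, hp2⟩ := bridge M cs ω τ hτlen
  -- arithmetic
  have hA := statRun_length M cs (ω.reverse.zip σ)
  have hB := statRun_length M cs (ω.zip τ)
  have hlenA : (ω.reverse.zip σ).length = ω.length := by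
    rw [List.length_zip, hσlen, List.length_reverse]
    omega
  have hlenB : (ω.zip τ).length = ω.length := by
    rw [List.length_zip, hτlen]
    omega
  have hlu : cs.length u⁻¹ = cs.length u := cs.length_inv u
  rw [hlenA, ← hu] at hA
  rw [hlenB, hτm] at hB
  have hnA : n = zdF M cs (ω.reverse.zip σ) + d1F M cs (ω.reverse.zip σ) := hn
  have hnB : zdF M cs (ω.zip τ) + d1F M cs (ω.zip τ) = n := hτd
  have hbad' : plF M cs (ω.reverse.zip σ) ≤ zdF M cs (ω.reverse.zip σ) := by
    rw [← hz, ← hp]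
    exact hbad
  have hgoal : plF M cs (ω.zip τ) ≤ zdF M cs (ω.zip τ) := by omega
  have hcontra := h τ ⟨hτlen, hτf⟩
  rw [hz2, hp2] at hcontra
  omega

end Dev

/-- If, for every reduced expression `w₁⋯w_p` of every element `w`, the
element `w` is Deodhar exactly when the product `C'_{w₁}⋯C'_{w_p}` of Kazhdan–Lusztig
basis elements of the Hecke algebra equals `C'_w`, then `w` is Deodhar if and only if
`w⁻¹` is Deodhar. -/
theorem deodhar_iff_inv_deodhar {B W : Type*} [Group W] (M : CoxeterMatrix B)
    (cs : CoxeterSystem M W) (A : Type*) [Ring A] (C : W → A)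
    (hC : ∀ (w : W) (ω : List B), cs.IsReduced ω → cs.wordProd ω = w →
      (IsDeodharElt M cs w ↔ (ω.map (fun i => C (cs.simple i))).prod = C w))
    (w : W) :
    IsDeodharElt M cs w ↔ IsDeodharElt M cs w⁻¹ := by
  constructor
  · intro h ρ hred hprod
    have h1 : cs.IsReduced ρ.reverse := (cs.isReduced_reverse_iff ρ).mpr hred
    have h2 : cs.wordProd ρ.reverse = w := by rw [cs.wordProd_reverse, hprod, inv_inv]
    have h4 := deodhar_expr_reverse M cs ρ.reverse (h ρ.reverse h1 h2)
    rwa [List.reverse_reverse] at h4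
  · intro h ρ hred hprod
    have h1 : cs.IsReduced ρ.reverse := (cs.isReduced_reverse_iff ρ).mpr hred
    have h2 : cs.wordProd ρ.reverse = w⁻¹ := by rw [cs.wordProd_reverse, hprod]
    have h4 := deodhar_expr_reverse M cs ρ.reverse (h ρ.reverse h1 h2)
    rwa [List.reverse_reverse] at h4


end Paper
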